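/- arXiv:cs/0207084 — 2 statements merged into one kernel-verified Lean document; each statement's English description precedes it below -/
import Mathlib

section
/- Let S = {φ_1,…,φ_n} and T be finite sets of propositional formulas, P = var(S ∪ T), and G = {g_1,…,g_n} a set of fresh atoms not occurring in S ∪ T. For S' ⊆ S let M_{S'} ⊆ G be the interpretation with g_i ∈ M_{S'} iff φ_i ∈ S'. Then T ∪ S' is consistent if and only if the quantified Boolean formula C[T,S] = ∃P (T ∧ (G ≤ S)) is true under M_{S'}. -/
/-!
A witness for the quantifier block `∃P` may change only atoms of `P = var(S ∪ T)`, so the fresh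
guess atoms keep their values from `M_{S'}`; by injectivity of `g`, the conjuncts `g_i → φ_i` then
demand exactly the `φ_i ∈ S'`. Conversely, a model of `T ∪ S'` overwritten outside `P` by `M_{S'}`
is such a witness, since a formula only sees its own atoms.
-/

namespace Para

/-- Propositional formulas over an alphabet `α`. -/
inductive Fml (α : Type) : Type
  | atom : α → Fml α
  | top : Fml α
  | bot : Fml α
  | neg : Fml α → Fml α
  | conj : Fml α → Fml α → Fml α
  | disj : Fml α → Fml α → Fml α
  | impl : Fml α → Fml α → Fml α

namespace Fml

variable {α β : Type}

/-- Biconditional `a ≡ b`. -/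
def iff' (a b : Fml α) : Fml α := conj (impl a b) (impl b a)

/-- Classical satisfaction: truth of a formula under an interpretation
(a set of atoms, those being true). -/
def holds (M : Set α) : Fml α → Prop
  | atom p => p ∈ M
  | top => True
  | bot => False
  | neg φ => ¬ holds M φ
  | conj φ ψ => holds M φ ∧ holds M ψ
  | disj φ ψ => holds M φ ∨ holds M ψ
  | impl φ ψ => holds M φ → holds M ψ

/-- The set of atoms occurring in a formula. -/
def atoms : Fml α → Set α
  | atom p => {p}
  | top => ∅
  | bot => ∅
  | neg φ => atoms φ
  | conj φ ψ => atoms φ ∪ atoms ψ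
  | disj φ ψ => atoms φ ∪ atoms ψ
  | impl φ ψ => atoms φ ∪ atoms ψ

/-- Renaming of atoms. -/
def map (f : α → β) : Fml α → Fml β
  | atom p => atom (f p)
  | top => top
  | bot => bot
  | neg φ => neg (map f φ)
  | conj φ ψ => conj (map f φ) (map f ψ)
  | disj φ ψ => disj (map f φ) (map f ψ)
  | impl φ ψ => impl (map f φ) (map f ψ)

end Fml

/-- Classical consequence (= derivability, by soundness and completeness of
classical propositional logic). -/
def Entails {α : Type} (S : Set (Fml α)) (φ : Fml α) : Prop :=
  ∀ M : Set α, (∀ ψ ∈ S, ψ.holds M) → φ.holds M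

/-- Deductive closure `Cn`. -/
def Cn {α : Type} (S : Set (Fml α)) : Set (Fml α) := {φ | Entails S φ}

/-- Consistency: `⊥ ∉ Cn S`. -/
def Consistent {α : Type} (S : Set (Fml α)) : Prop := Fml.bot ∉ Cn S

/-- The atoms occurring in a set of formulas, `var(S)`. -/
def vars {α : Type} (S : Set (Fml α)) : Set α := ⋃ φ ∈ S, φ.atoms

/-- The alphabet `Σ ∪ Σ^±`: original atoms `p`, positive atoms `p⁺`,
negative atoms `p⁻`. -/
inductive XAtom (α : Type) : Type
  | orig : α → XAtom α
  | pos : α → XAtom α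
  | neg : α → XAtom α

/-- Signed translation with a polarity flag (`true` = positive occurrence):
positive occurrences of `p` become `p⁺`, negative ones become `¬p⁻`. -/
def signedAux {α : Type} : Fml α → Bool → Fml (XAtom α)
  | .atom p, true => .atom (.pos p)
  | .atom p, false => .neg (.atom (.neg p))
  | .top, _ => .top
  | .bot, _ => .bot
  | .neg φ, b => .neg (signedAux φ (!b))
  | .conj φ ψ, b => .conj (signedAux φ b) (signedAux ψ b)
  | .disj φ ψ, b => .disj (signedAux φ b) (signedAux ψ b)
  | .impl φ ψ, b => .impl (signedAux φ (!b)) (signedAux ψ b)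

/-- The signed translation `α^±`. -/
def signed {α : Type} (φ : Fml α) : Fml (XAtom α) := signedAux φ true

/-- Embedding of `L_Σ` into `L_{Σ∪Σ^±}`. -/
def emb {α : Type} : Fml α → Fml (XAtom α) := Fml.map XAtom.orig

/-- `W^± = {α^± | α ∈ W}`. -/
def signedSet {α : Type} (W : Set (Fml α)) : Set (Fml (XAtom α)) := signed '' W

/-- A default rule `(pre : jus / con)`. -/
structure Dflt (α : Type) where
  pre : Fml α
  jus : Fml α
  con : Fml α

/-- Atoms occurring in a default rule. -/
def Dflt.atoms {α : Type} (d : Dflt α) : Set α :=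
  d.pre.atoms ∪ d.jus.atoms ∪ d.con.atoms

/-- The Reiter sequence `E_1 = V`, `E_{n+1} = Cn(E_n) ∪ {γ | (α:β/γ) ∈ D, α ∈ E_n, ¬β ∉ E}`
(0-indexed here). -/
def extSeq {α : Type} (D : Set (Dflt α)) (V E : Set (Fml α)) : ℕ → Set (Fml α)
  | 0 => V
  | n+1 => Cn (extSeq D V E n) ∪
      {γ | ∃ d ∈ D, d.con = γ ∧ d.pre ∈ extSeq D V E n ∧ Fml.neg d.jus ∉ E}

/-- `E` is a (Reiter) extension of the default theory `(D, V)`. -/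
def IsExtension {α : Type} (D : Set (Dflt α)) (V E : Set (Fml α)) : Prop :=
  E = ⋃ n, extSeq D V E n

/-- `E` is a hierarchic extension of `(⋃ n, Dn n, V)` with respect to the
partition `⟨Dn⟩`: `E = ⋃ En` where `E_0 = V` and `E_{n+1}` is an extension
of `(Dn n, En n)`. -/
def IsHierExtension {α : Type} (Dn : ℕ → Set (Dflt α)) (V E : Set (Fml α)) : Prop :=
  ∃ En : ℕ → Set (Fml α), En 0 = V ∧ (∀ n, IsExtension (Dn n) (En n) (En (n+1))) ∧
    E = ⋃ n, En n

/-- The signed default `δ_p = ( : p⁺≡¬p⁻ / (p≡p⁺)∧(¬p≡p⁻) )`. -/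
def deltap {α : Type} (p : α) : Dflt (XAtom α) where
  pre := .top
  jus := Fml.iff' (.atom (.pos p)) (.neg (.atom (.neg p)))
  con := .conj (Fml.iff' (.atom (.orig p)) (.atom (.pos p)))
               (Fml.iff' (.neg (.atom (.orig p))) (.atom (.neg p)))

/-- `D_Σ = {δ_p | p ∈ Σ}`. -/
def DSigma (α : Type) : Set (Dflt (XAtom α)) := Set.range (deltap (α := α))

/-- `Π_S = {c(δ_p) | p ∈ Σ, ¬j(δ_p) ∉ S}`. -/
def PiSet {α : Type} (S : Set (Fml (XAtom α))) : Set (Fml (XAtom α)) :=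
  {f | ∃ p : α, Fml.neg (deltap p).jus ∉ S ∧ f = (deltap p).con}

/-- The set of all extensions of `(D_Σ, W^±)`. -/
def Exts {α : Type} (W : Set (Fml α)) : Set (Set (Fml (XAtom α))) :=
  {E | IsExtension (DSigma α) (signedSet W) E}

/-- Credulous unsigned consequence `W ⊢_c φ`. -/
def CredU {α : Type} (W : Set (Fml α)) (φ : Fml α) : Prop :=
  ∃ E ∈ Exts W, emb φ ∈ Cn (signedSet W ∪ PiSet E)

/-- Skeptical unsigned consequence `W ⊢_s φ`. -/
def SkepU {α : Type} (W : Set (Fml α)) (φ : Fml α) : Prop :=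
  ∀ E ∈ Exts W, emb φ ∈ Cn (signedSet W ∪ PiSet E)

/-- Prudent unsigned consequence `W ⊢_p φ`. -/
def PrudU {α : Type} (W : Set (Fml α)) (φ : Fml α) : Prop :=
  emb φ ∈ Cn (signedSet W ∪ ⋂ E ∈ Exts W, PiSet E)

/-- Credulous signed consequence `W ⊢_c^± φ`. -/
def CredS {α : Type} (W : Set (Fml α)) (φ : Fml α) : Prop :=
  ∃ E ∈ Exts W, signed φ ∈ Cn (signedSet W ∪ PiSet E)

/-- Skeptical signed consequence `W ⊢_s^± φ`. -/
def SkepS {α : Type} (W : Set (Fml α)) (φ : Fml α) : Prop :=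
  ∀ E ∈ Exts W, signed φ ∈ Cn (signedSet W ∪ PiSet E)

/-- Prudent signed consequence `W ⊢_p^± φ`. -/
def PrudS {α : Type} (W : Set (Fml α)) (φ : Fml α) : Prop :=
  signed φ ∈ Cn (signedSet W ∪ ⋂ E ∈ Exts W, PiSet E)

def Cc {α : Type} (W : Set (Fml α)) : Set (Fml α) := {φ | CredU W φ}
def Cs {α : Type} (W : Set (Fml α)) : Set (Fml α) := {φ | SkepU W φ}
def Cp {α : Type} (W : Set (Fml α)) : Set (Fml α) := {φ | PrudU W φ}
def CcPM {α : Type} (W : Set (Fml α)) : Set (Fml α) := {φ | CredS W φ}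
def CsPM {α : Type} (W : Set (Fml α)) : Set (Fml α) := {φ | SkepS W φ}
def CpPM {α : Type} (W : Set (Fml α)) : Set (Fml α) := {φ | PrudS W φ}

/-- `J'` is a maximal subset of `J` consistent with `V`. -/
def IsMaxConsSub {α : Type} (V J' J : Set (Fml α)) : Prop :=
  J' ⊆ J ∧ Consistent (V ∪ J') ∧
    ∀ J'', J' ⊆ J'' → J'' ⊆ J → Consistent (V ∪ J'') → J'' = J'

/-- Quantified Boolean formulas over an alphabet `α`. -/
inductive QBF (α : Type) : Type
  | atom : α → QBF α
  | top : QBF α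
  | bot : QBF α
  | neg : QBF α → QBF α
  | conj : QBF α → QBF α → QBF α
  | disj : QBF α → QBF α → QBF α
  | impl : QBF α → QBF α → QBF α
  | all : α → QBF α → QBF α
  | ex : α → QBF α → QBF α

/-- Truth of a QBF under an interpretation (a set of atoms):
`∀p Ψ` is true iff `Ψ` is true with `p` set to true and with `p` set to false,
dually for `∃p Ψ`. -/
def QBF.holds {α : Type} : Set α → QBF α → Prop
  | M, .atom p => p ∈ M
  | _, .top => True
  | _, .bot => False
  | M, .neg Φ => ¬ QBF.holds M Φ
  | M, .conj Φ Ψ => QBF.holds M Φ ∧ QBF.holds M Ψ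
  | M, .disj Φ Ψ => QBF.holds M Φ ∨ QBF.holds M Ψ
  | M, .impl Φ Ψ => QBF.holds M Φ → QBF.holds M Ψ
  | M, .all p Φ => QBF.holds (M ∪ {p}) Φ ∧ QBF.holds (M \ {p}) Φ
  | M, .ex p Φ => QBF.holds (M ∪ {p}) Φ ∨ QBF.holds (M \ {p}) Φ

/-- A QBF is valid iff it is true under every interpretation. -/
def QBF.Valid {α : Type} (Φ : QBF α) : Prop := ∀ M : Set α, Φ.holds M

/-- Propositional formulas are (quantifier-free) QBFs. -/
def Fml.toQBF {α : Type} : Fml α → QBF α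
  | .atom p => .atom p
  | .top => .top
  | .bot => .bot
  | .neg φ => .neg φ.toQBF
  | .conj φ ψ => .conj φ.toQBF ψ.toQBF
  | .disj φ ψ => .disj φ.toQBF ψ.toQBF
  | .impl φ ψ => .impl φ.toQBF ψ.toQBF

/-- Conjunction of a finite list of QBFs. -/
def QBF.conjList {α : Type} (l : List (QBF α)) : QBF α := l.foldr QBF.conj QBF.top

/-- `∃P Φ`: block of existential quantifiers over the atoms in `P`. -/
def QBF.exList {α : Type} (P : List α) (Φ : QBF α) : QBF α := P.foldr QBF.ex Φ

/-- `∀P Φ`: block of universal quantifiers over the atoms in `P`. -/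
def QBF.allList {α : Type} (P : List α) (Φ : QBF α) : QBF α := P.foldr QBF.all Φ

/-- The module `C[T,S] = ∃P (T ∧ (G ≤ S))`, where `T` is given as the list `Ts`
of its elements and the pairs `(g_i, φ_i)` encode `G ≤ S = ⋀ (g_i → φ_i)`. -/
def CMod {α : Type} (P : List α) (Ts : List (Fml α)) (pairs : List (α × Fml α)) : QBF α :=
  QBF.exList P (QBF.conj (QBF.conjList (Ts.map Fml.toQBF))
    (QBF.conjList (pairs.map (fun gp => QBF.impl (QBF.atom gp.1) gp.2.toQBF))))

/-- The module `Ext[T]` for a finite default theory `T = (D,V)` with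
`D = {δ_1,…,δ_n}` and guessing atoms `g_1,…,g_n`:
`C[V, j(D)] ∧ ⋀_i (¬g_i → ¬ C[V ∪ {j(δ_i)}, j(D \ {δ_i})])`. -/
def ExtMod {α : Type} {n : ℕ} (P : List α) (Vl : List (Fml α))
    (δ : Fin n → Dflt α) (g : Fin n → α) : QBF α :=
  QBF.conj
    (CMod P Vl ((List.finRange n).map fun i => (g i, (δ i).jus)))
    (QBF.conjList ((List.finRange n).map fun i =>
      QBF.impl (QBF.neg (QBF.atom (g i)))
        (QBF.neg (CMod P (Vl ++ [(δ i).jus])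
          (((List.finRange n).filter (fun j => j != i)).map fun j => (g j, (δ j).jus))))))

/-- The module `Conseq[T,φ] = ∀P' (V ∧ (G ≤ c(D)) → φ)`. -/
def ConseqMod {α : Type} {n : ℕ} (P' : List α) (Vl : List (Fml α))
    (δ : Fin n → Dflt α) (g : Fin n → α) (φ : Fml α) : QBF α :=
  QBF.allList P'
    (QBF.impl
      (QBF.conj (QBF.conjList (Vl.map Fml.toQBF))
        (QBF.conjList ((List.finRange n).map fun i =>
          QBF.impl (QBF.atom (g i)) (δ i).con.toQBF)))
      φ.toQBF)

namespace Fml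

variable {α : Type}

theorem holds_congr (ψ : Fml α) {M N : Set α} (h : ∀ a ∈ ψ.atoms, a ∈ M ↔ a ∈ N) :
    ψ.holds M ↔ ψ.holds N := by
  induction ψ with
  | atom p => exact h p rfl
  | top | bot => exact Iff.rfl
  | neg φ ih => exact not_congr (ih h)
  | conj φ χ ih₁ ih₂ =>
    exact and_congr (ih₁ fun a ha => h a (.inl ha)) (ih₂ fun a ha => h a (.inr ha))
  | disj φ χ ih₁ ih₂ =>
    exact or_congr (ih₁ fun a ha => h a (.inl ha)) (ih₂ fun a ha => h a (.inr ha))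
  | impl φ χ ih₁ ih₂ =>
    exact imp_congr (ih₁ fun a ha => h a (.inl ha)) (ih₂ fun a ha => h a (.inr ha))

theorem holds_ite {ψ : Fml α} {t : Set α} (hψ : ψ.atoms ⊆ t) (M N : Set α) :
    ψ.holds (t.ite M N) ↔ ψ.holds M :=
  ψ.holds_congr fun a ha => by simp [Set.ite, hψ ha]

@[simp]
theorem holds_toQBF (ψ : Fml α) (M : Set α) : QBF.holds M ψ.toQBF ↔ ψ.holds M := by
  induction ψ <;> simp [toQBF, QBF.holds, holds, *]

end Fml

theorem consistent_iff_exists_model {α : Type} {S : Set (Fml α)} :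
    Consistent S ↔ ∃ M, ∀ ψ ∈ S, ψ.holds M := by
  simp [Consistent, Cn, Entails, Fml.holds]

namespace QBF

variable {α : Type}

@[simp]
theorem holds_conjList (l : List (QBF α)) (M : Set α) :
    (conjList l).holds M ↔ ∀ Φ ∈ l, Φ.holds M := by
  induction l with
  | nil => simp [conjList, QBF.holds]
  | cons Ψ l ih => simp [conjList, QBF.holds, ← ih]

theorem holds_exList (P : List α) (Φ : QBF α) (M : Set α) :
    (exList P Φ).holds M ↔ ∃ N, (∀ a ∉ P, a ∈ N ↔ a ∈ M) ∧ Φ.holds N := by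
  induction P generalizing M with
  | nil =>
    simp only [exList, List.foldr, List.not_mem_nil, not_false_eq_true, forall_const]
    exact ⟨fun h => ⟨M, fun _ => .rfl, h⟩, fun ⟨N, hN, h⟩ => Set.ext hN ▸ h⟩
  | cons p P ih =>
    change (exList P Φ).holds (M ∪ {p}) ∨ (exList P Φ).holds (M \ {p}) ↔ _
    rw [ih, ih, ← exists_or]
    refine exists_congr fun N => ?_
    rw [← or_and_right]
    refine and_congr_left' ⟨?_, fun h => ?_⟩
    · rintro (h | h) a ha <;> grind
    · by_cases hp : p ∈ N
      · exact .inl fun a ha => by grind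
      · exact .inr fun a ha => by grind

end QBF

theorem holds_CMod {α : Type} (P : List α) (Ts : List (Fml α)) (pairs : List (α × Fml α))
    (M : Set α) :
    (CMod P Ts pairs).holds M ↔ ∃ N, (∀ a ∉ P, a ∈ N ↔ a ∈ M) ∧
      (∀ ψ ∈ Ts, ψ.holds N) ∧ ∀ gψ ∈ pairs, gψ.1 ∈ N → gψ.2.holds N := by
  simp only [CMod, QBF.holds_exList, QBF.holds, QBF.holds_conjList, List.forall_mem_map,
    Fml.holds_toQBF]

/-- For finite sets `S = {φ_1,…,φ_n}` (given as the indexed family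
`φ`) and `T` (given as the list `Tl` of its elements), `P = var(S ∪ T)`, fresh
guessing atoms `g_1,…,g_n`, and `S' ⊆ S` with interpretation
`M_{S'} = {g_i | φ_i ∈ S'}`: `T ∪ S'` is consistent iff the QBF
`C[T,S] = ∃P (T ∧ (G ≤ S))` is true under `M_{S'}`. -/
theorem consistency_QBF_encoding {α : Type} {n : ℕ} (φ : Fin n → Fml α)
    (Tl : List (Fml α)) (g : Fin n → α) (hginj : Function.Injective g)
    (hfresh : ∀ i, g i ∉ vars (Set.range φ ∪ {ψ | ψ ∈ Tl}))
    (P : List α) (hP : ∀ a, a ∈ P ↔ a ∈ vars (Set.range φ ∪ {ψ | ψ ∈ Tl}))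
    (S' : Set (Fml α)) (hS' : S' ⊆ Set.range φ) :
    Consistent ({ψ | ψ ∈ Tl} ∪ S') ↔
      QBF.holds {a | ∃ i, φ i ∈ S' ∧ g i = a}
        (CMod P Tl ((List.finRange n).map (fun i => (g i, φ i)))) := by
  have hatoms : ∀ ψ ∈ Set.range φ ∪ {ψ | ψ ∈ Tl}, ψ.atoms ⊆ {a | a ∈ P} :=
    fun ψ hψ a ha => (hP a).2 (Set.subset_biUnion_of_mem hψ ha)
  have hgP : ∀ i, g i ∉ P := fun i h => hfresh i ((hP _).1 h)
  rw [consistent_iff_exists_model, holds_CMod]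
  simp only [List.forall_mem_map, List.mem_finRange, forall_const]
  constructor
  · rintro ⟨M, hM⟩
    refine ⟨Set.ite {a | a ∈ P} M {a | ∃ i, φ i ∈ S' ∧ g i = a},
      fun a ha => by simp [Set.ite, ha], fun ψ hψ => ?_, fun i hi => ?_⟩
    · exact (Fml.holds_ite (hatoms ψ (.inr hψ)) _ _).2 (hM ψ (.inl hψ))
    · obtain ⟨j, hj, hji⟩ : ∃ j, φ j ∈ S' ∧ g j = g i := by simpa [Set.ite, hgP i] using hi
      rw [hginj hji] at hj
      exact (Fml.holds_ite (hatoms _ (.inl ⟨i, rfl⟩)) _ _).2 (hM _ (.inr hj))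
  · rintro ⟨N, hN, hT, hS⟩
    refine ⟨N, fun ψ hψ => hψ.elim (hT ψ) fun hψS' => ?_⟩
    obtain ⟨i, rfl⟩ := hS' hψS'
    exact hS i ((hN _ (hgP i)).2 ⟨i, hψS', rfl⟩)

end Para
end

section
/- For every finite set W ⊆ L_Σ of propositional formulas, the signed paraconsistent consequence operators are increasing in strength: C_p^±(W) ⊆ C_s^±(W) ⊆ C_c^±(W). -/
namespace Para

/-!
Prudent consequence implies skeptical consequence because `⋂ Π_E ⊆ Π_E`, and skeptical implies
credulous as soon as `(D_Σ, W^±)` has an extension. An extension is `Cn(W^± ∪ {c(δ_p) | p ∈ S})`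
for any fixpoint `S` of `p ∈ S ↔ ¬j(δ_p) ∉ Cn(W^± ∪ {c(δ_p) | p ∈ S})`. Since the atoms `p` do
not occur in `W^±`, each `c(δ_p)` can be satisfied by reading `p` off `p⁺`, so the condition says
that `W^±` has a model satisfying `j(δ_q)` for all `q ∈ S ∪ {p}`. A fixpoint is then obtained
from a maximal such `S` among the finitely many atoms whose signed copies occur in `W^±`, together
with all other atoms, whose justifications can be satisfied freely.
-/

section Consequence

variable {α : Type}

theorem subset_Cn (S : Set (Fml α)) : S ⊆ Cn S := fun _ hφ _ hM => hM _ hφ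

theorem Cn_mono {S T : Set (Fml α)} (h : S ⊆ T) : Cn S ⊆ Cn T :=
  fun _ hφ M hM => hφ M fun ψ hψ => hM ψ (h hψ)

theorem Cn_subset_Cn {S T : Set (Fml α)} (h : S ⊆ Cn T) : Cn S ⊆ Cn T :=
  fun _ hφ M hM => hφ M fun _ hψ => h hψ M hM

theorem Fml.atoms_finite (φ : Fml α) : φ.atoms.Finite := by
  induction φ <;> simp_all [Fml.atoms]

theorem Fml.holds_congr_s5 {M M' : Set α} {φ : Fml α} (h : ∀ a ∈ φ.atoms, a ∈ M ↔ a ∈ M') :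
    φ.holds M ↔ φ.holds M' := by
  induction φ with
  | atom p => exact h p rfl
  | top | bot => rfl
  | neg φ ih => exact not_congr (ih h)
  | conj _ _ ihφ ihψ | disj _ _ ihφ ihψ | impl _ _ ihφ ihψ =>
    simp only [Fml.atoms, Set.mem_union] at h
    simp only [Fml.holds, ihφ fun a ha => h a (.inl ha), ihψ fun a ha => h a (.inr ha)]

theorem holds_of_agreeOn_vars {V : Set (Fml α)} {M M' : Set α}
    (h : ∀ a ∈ vars V, a ∈ M ↔ a ∈ M') (hM : ∀ ψ ∈ V, ψ.holds M) : ∀ ψ ∈ V, ψ.holds M' :=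
  fun ψ hψ => (Fml.holds_congr_s5 fun a ha => h a (Set.mem_biUnion hψ ha)).mp (hM ψ hψ)

end Consequence

section SignedDefaults

variable {α : Type}

theorem holds_deltap_jus (M : Set (XAtom α)) (p : α) :
    (deltap p).jus.holds M ↔ (XAtom.pos p ∈ M ↔ XAtom.neg p ∉ M) := by
  simp only [deltap, Fml.iff', Fml.holds]
  tauto

theorem holds_deltap_con (M : Set (XAtom α)) (p : α) :
    (deltap p).con.holds M ↔
      ((XAtom.orig p ∈ M ↔ XAtom.pos p ∈ M) ∧ (XAtom.orig p ∉ M ↔ XAtom.neg p ∈ M)) := by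
  simp only [deltap, Fml.iff', Fml.holds]
  tauto

theorem holds_deltap_jus_of_con {M : Set (XAtom α)} {p : α} (h : (deltap p).con.holds M) :
    (deltap p).jus.holds M := by
  rw [holds_deltap_con] at h
  rw [holds_deltap_jus]
  tauto

theorem orig_notMem_atoms_signedAux (q : α) (φ : Fml α) (b : Bool) :
    XAtom.orig q ∉ (signedAux φ b).atoms := by
  induction φ generalizing b with
  | atom p => cases b <;> simp [signedAux, Fml.atoms]
  | top | bot => simp [signedAux, Fml.atoms]
  | neg φ ih => exact ih !b
  | conj φ ψ ihφ ihψ | disj φ ψ ihφ ihψ =>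
    simp only [signedAux, Fml.atoms, Set.mem_union, not_or]
    exact ⟨ihφ b, ihψ b⟩
  | impl φ ψ ihφ ihψ =>
    simp only [signedAux, Fml.atoms, Set.mem_union, not_or]
    exact ⟨ihφ !b, ihψ b⟩

theorem orig_notMem_vars_signedSet (W : Set (Fml α)) (q : α) :
    XAtom.orig q ∉ vars (signedSet W) := by
  simp only [vars, signedSet, Set.biUnion_image, Set.mem_iUnion, not_exists]
  exact fun φ _ => orig_notMem_atoms_signedAux q φ true

theorem vars_signedSet_finite {W : Set (Fml α)} (hW : W.Finite) :
    (vars (signedSet W)).Finite :=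
  (hW.image signed).biUnion fun φ _ => φ.atoms_finite

def consSet (S : Set α) : Set (Fml (XAtom α)) := {f | ∃ p ∈ S, f = (deltap p).con}

theorem isExtension_Cn_union_consSet (V : Set (Fml (XAtom α))) (S : Set α)
    (hS : ∀ p, p ∈ S ↔ Fml.neg (deltap p).jus ∉ Cn (V ∪ consSet S)) :
    IsExtension (DSigma α) V (Cn (V ∪ consSet S)) := by
  set E := Cn (V ∪ consSet S)
  have hV₁ : V ⊆ extSeq (DSigma α) V E 1 := fun _ h => .inl (subset_Cn V h)
  have htop : Fml.top ∈ extSeq (DSigma α) V E 1 := .inl fun _ _ => trivial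
  have hcons₂ : consSet S ⊆ extSeq (DSigma α) V E 2 := by
    rintro _ ⟨p, hp, rfl⟩
    exact .inr ⟨deltap p, ⟨p, rfl⟩, rfl, htop, (hS p).mp hp⟩
  have hV₂ : V ⊆ extSeq (DSigma α) V E 2 := fun _ h => .inl (subset_Cn _ (hV₁ h))
  have hE₃ : E ⊆ extSeq (DSigma α) V E 3 :=
    fun _ h => .inl (Cn_mono (Set.union_subset hV₂ hcons₂) h)
  have hseq : ∀ n, extSeq (DSigma α) V E n ⊆ E := by
    intro n
    induction n with
    | zero => exact Set.subset_union_left.trans (subset_Cn _)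
    | succ n ih =>
      rintro γ (h | ⟨_, ⟨p, rfl⟩, rfl, -, hp⟩)
      · exact Cn_subset_Cn ih h
      · exact subset_Cn _ (.inr ⟨p, (hS p).mpr hp, rfl⟩)
  exact (hE₃.trans (Set.subset_iUnion _ 3)).antisymm (Set.iUnion_subset hseq)

end SignedDefaults

section Fixpoint

variable {α : Type} {V : Set (Fml (XAtom α))}

def origToPos : XAtom α → XAtom α
  | .orig q => .pos q
  | x => x

def JusSatisfiable (V : Set (Fml (XAtom α))) (S : Set α) : Prop :=
  ∃ M : Set (XAtom α), (∀ ψ ∈ V, ψ.holds M) ∧ ∀ p ∈ S, (deltap p).jus.holds M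

theorem JusSatisfiable.anti {S T : Set α} (hTS : T ⊆ S) (h : JusSatisfiable V S) :
    JusSatisfiable V T :=
  let ⟨M, hV, hS⟩ := h
  ⟨M, hV, fun p hp => hS p (hTS hp)⟩

theorem JusSatisfiable.union {S T : Set α} (h : JusSatisfiable V S)
    (hT : ∀ p ∈ T, XAtom.pos p ∉ vars V ∧ XAtom.neg p ∉ vars V) :
    JusSatisfiable V (S ∪ T) := by
  obtain ⟨M, hV, hS⟩ := h
  refine ⟨(M \ XAtom.neg '' T) ∪ XAtom.pos '' T, holds_of_agreeOn_vars ?_ hV, ?_⟩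
  · intro a ha
    have hpos : a ∉ XAtom.pos '' T := by rintro ⟨p, hp, rfl⟩; exact (hT p hp).1 ha
    have hneg : a ∉ XAtom.neg '' T := by rintro ⟨p, hp, rfl⟩; exact (hT p hp).2 ha
    simp only [Set.mem_union, Set.mem_sdiff, hpos, hneg, not_false_eq_true, and_true, or_false]
  · rintro p hp
    rw [holds_deltap_jus]
    by_cases hpT : p ∈ T
    · simp [hpT]
    · have := (holds_deltap_jus M p).mp (hp.resolve_right hpT |> hS p)
      simpa [hpT] using this

theorem notMem_Cn_neg_jus_iff (horig : ∀ q, XAtom.orig q ∉ vars V) (S : Set α) (p : α) :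
    Fml.neg (deltap p).jus ∉ Cn (V ∪ consSet S) ↔ JusSatisfiable V (insert p S) := by
  simp only [Cn, Entails, Set.mem_ofPred_eq, Fml.holds, not_forall, not_not, exists_prop]
  constructor
  · rintro ⟨M, hM, hp⟩
    refine ⟨M, fun ψ hψ => hM ψ (.inl hψ), ?_⟩
    rintro q (rfl | hq)
    · exact hp
    · exact holds_deltap_jus_of_con (hM _ (.inr ⟨q, hq, rfl⟩))
  · rintro ⟨M, hV, hjus⟩
    refine ⟨origToPos ⁻¹' M, fun ψ hψ => ?_, (holds_deltap_jus _ p).mpr ?_⟩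
    · rcases hψ with hψ | ⟨q, hq, rfl⟩
      · refine holds_of_agreeOn_vars (fun a ha => ?_) hV ψ hψ
        cases a with
        | orig q => exact absurd ha (horig q)
        | pos q | neg q => rfl
      · rw [holds_deltap_con]
        have := (holds_deltap_jus M q).mp (hjus q (.inr hq))
        simp only [Set.mem_preimage, origToPos]
        tauto
    · exact (holds_deltap_jus M p).mp (hjus p (.inl rfl))

theorem exists_jusSatisfiable_fixpoint (hV : (vars V).Finite) :
    ∃ S : Set α, ∀ p, p ∈ S ↔ JusSatisfiable V (insert p S) := by
  by_cases h₀ : JusSatisfiable V ∅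
  swap
  · exact ⟨∅, fun p =>
      iff_of_false (Set.notMem_empty p) fun h => h₀ (h.anti (Set.empty_subset _))⟩
  set R : Set α := {p | XAtom.pos p ∈ vars V ∨ XAtom.neg p ∈ vars V}
  have hR : R.Finite :=
    (hV.preimage (f := XAtom.pos) fun _ _ _ _ => XAtom.pos.inj).union
      (hV.preimage (f := XAtom.neg) fun _ _ _ _ => XAtom.neg.inj)
  obtain ⟨S, ⟨hSR, hS⟩, hmax⟩ : ∃ S, Maximal (fun S => S ⊆ R ∧ JusSatisfiable V S) S :=
    (hR.finite_subsets.subset fun _ h => h.1).exists_maximal ⟨∅, Set.empty_subset _, h₀⟩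
  refine ⟨S ∪ Rᶜ, fun p => ⟨fun hp => ?_, fun hp => ?_⟩⟩
  · rw [Set.insert_eq_of_mem hp]
    exact hS.union fun q hq => not_or.mp hq
  · by_contra hpS
    have hpR : p ∈ R := by_contra fun h => hpS (.inr h)
    have hpS' : JusSatisfiable V (insert p S) :=
      hp.anti (Set.insert_subset_insert Set.subset_union_left)
    exact hpS (.inl (hmax ⟨Set.insert_subset hpR hSR, hpS'⟩ (Set.subset_insert p S)
      (Set.mem_insert p S)))

theorem exists_isExtension (hV : (vars V).Finite) (horig : ∀ q, XAtom.orig q ∉ vars V) :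
    ∃ E, IsExtension (DSigma α) V E := by
  obtain ⟨S, hS⟩ := exists_jusSatisfiable_fixpoint hV
  exact ⟨_, isExtension_Cn_union_consSet V S fun p =>
    (hS p).trans (notMem_Cn_neg_jus_iff horig S p).symm⟩

end Fixpoint

/-- For every finite `W ⊆ L_Σ`, `C_p^±(W) ⊆ C_s^±(W) ⊆ C_c^±(W)`. -/
theorem signed_increasing {α : Type} (W : Set (Fml α)) (hW : W.Finite) :
    CpPM W ⊆ CsPM W ∧ CsPM W ⊆ CcPM W := by
  refine ⟨fun φ hφ E hE =>
    Cn_mono (Set.union_subset_union_right _ (Set.biInter_subset_of_mem hE)) hφ, fun φ hφ => ?_⟩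
  obtain ⟨E, hE⟩ := exists_isExtension (vars_signedSet_finite hW) (orig_notMem_vars_signedSet W)
  exact ⟨E, hE, hφ E hE⟩
end Para
end
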